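/- Let Q be a Z^n-quiver, H a nonempty set of vertices, and v a vertex. Then v ∉ P(H) if and only if there is a vertex w ≠ v such that for each z ∈ H there is an admissible path from z to v passing through w. -/

import Mathlib

open CategoryTheory CategoryTheory.Limits

universe u v

/-- A quiver with arrows partitioned into `n+1` arrow types. -/
structure TypedQuiver (n : ℕ) where
  V : Type
  E : Type
  src : E → V
  tgt : E → V
  typ : E → Fin (n + 1)

namespace TypedQuiver

variable {n : ℕ}

/-- Paths in a typed quiver. -/
inductive Path (Q : TypedQuiver n) : Q.V → Q.V → Type where
  | nil (v : Q.V) : Path Q v v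
  | cons {u : Q.V} (e : Q.E) (γ : Path Q u (Q.src e)) : Path Q u (Q.tgt e)

namespace Path

variable {Q : TypedQuiver n}

/-- Length of a path. -/
def length : ∀ {u w : Q.V}, Q.Path u w → ℕ
  | _, _, nil _ => 0
  | _, _, cons _ γ => length γ + 1

/-- The number of arrows of a given type in a path. -/
def count : ∀ {u w : Q.V}, Q.Path u w → Fin (n + 1) → ℕ
  | _, _, nil _, _ => 0
  | _, _, cons e γ, t => count γ t + (if Q.typ e = t then 1 else 0)

/-- Concatenation of paths. -/
def comp : ∀ {u w x : Q.V}, Q.Path u w → Q.Path w x → Q.Path u x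
  | _, _, _, γ, nil _ => γ
  | _, _, _, γ, cons e δ => cons e (comp γ δ)

/-- A path is admissible if some arrow type does not occur in it. -/
def Admissible {u w : Q.V} (γ : Q.Path u w) : Prop := ∃ t, γ.count t = 0

/-- A path is simple if each arrow type occurs at most once. -/
def Simple {u w : Q.V} (γ : Q.Path u w) : Prop := ∀ t, γ.count t ≤ 1

/-- A maximal simple path: each arrow type occurs exactly once. -/
def MaximalSimple {u w : Q.V} (γ : Q.Path u w) : Prop := ∀ t, γ.count t = 1

/-- The essential type of a path: the set of arrow types occurring in it. -/
def essType {u w : Q.V} (γ : Q.Path u w) : Set (Fin (n + 1)) := {t | 0 < γ.count t}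

end Path

/-- A `ℤⁿ`-structure on a typed quiver. -/
structure IsZn (Q : TypedQuiver n) : Prop where
  npos : 0 < n
  nonempty : Nonempty Q.V
  unique_out : ∀ (v : Q.V) (t : Fin (n + 1)), ∃! e : Q.E, Q.src e = v ∧ Q.typ e = t
  connected : ∀ u w : Q.V, ∃ γ : Q.Path u w, γ.Admissible
  circuit : ∀ (u w : Q.V) (γ : Q.Path u w), γ.MaximalSimple → u = w
  same_type : ∀ (u w x : Q.V) (γ : Q.Path u w) (μ : Q.Path u x),
      γ.Admissible → μ.Admissible → (w = x ↔ γ.count = μ.count)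

/-- Two distinct vertices are neighbors if an admissible simple path connects them. -/
def Neighbors (Q : TypedQuiver n) (u w : Q.V) : Prop :=
  u ≠ w ∧ ∃ γ : Q.Path u w, γ.Admissible ∧ γ.Simple

/-- The hull of a set of vertices. -/
def hull (Q : TypedQuiver n) (H : Set Q.V) : Set Q.V :=
  {v | ∀ t : Fin (n + 1), ∃ z ∈ H, ∃ γ : Q.Path z v, γ.count t = 0}

/-- A representation of a typed quiver in a category. -/
structure Rep (Q : TypedQuiver n) (C : Type u) [Category.{v} C] where
  obj : Q.V → C
  map : ∀ e : Q.E, obj (Q.src e) ⟶ obj (Q.tgt e)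

namespace Rep

variable {Q : TypedQuiver n} {C : Type u} [Category.{v} C]

/-- The composition of the maps of a representation along a path. -/
def mapPath (𝔙 : Q.Rep C) : ∀ {u w : Q.V}, Q.Path u w → (𝔙.obj u ⟶ 𝔙.obj w)
  | _, _, .nil _ => 𝟙 _
  | _, _, .cons e γ => mapPath 𝔙 γ ≫ 𝔙.map e

end Rep

/-- A weakly linked net over a `ℤⁿ`-quiver. -/
structure IsWeaklyLinked (k : Type) [Field k] {Q : TypedQuiver n} {C : Type u}
    [Category.{v} C] [Preadditive C] [CategoryTheory.Linear k C] (𝔙 : Q.Rep C) : Prop where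
  scalar : ∀ (u w : Q.V) (γ₁ γ₂ : Q.Path u w), γ₂.Admissible →
      ∃ c : k, c ≠ 0 ∧ 𝔙.mapPath γ₁ = c • 𝔙.mapPath γ₂
  circuit : ∀ (u w : Q.V) (γ : Q.Path u w), γ.MaximalSimple → 𝔙.mapPath γ = 0

section Abelian

variable {Q : TypedQuiver n} {C : Type u} [Category.{v} C] [Abelian C]

/-- A linked net: kernels along admissible paths with disjoint essential types meet trivially. -/
def IsLinked (𝔙 : Q.Rep C) : Prop :=
  ∀ (u w x : Q.V) (γ₁ : Q.Path u w) (γ₂ : Q.Path u x), γ₁.Admissible → γ₂.Admissible →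
    γ₁.essType ∩ γ₂.essType = ∅ →
    kernelSubobject (𝔙.mapPath γ₁) ⊓ kernelSubobject (𝔙.mapPath γ₂) = ⊥

/-- Exactness: `Ker φ^u_w = Im φ^w_u` for neighboring vertices. -/
def IsExact (𝔙 : Q.Rep C) : Prop :=
  ∀ (u w : Q.V), Q.Neighbors u w → ∀ (γ : Q.Path u w) (μ : Q.Path w u),
    γ.Admissible → μ.Admissible →
    kernelSubobject (𝔙.mapPath γ) = imageSubobject (𝔙.mapPath μ)

/-- Binary: each associated map is zero or a monomorphism. -/
def IsBinary (𝔙 : Q.Rep C) : Prop :=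
  ∀ (u w : Q.V) (γ : Q.Path u w), 𝔙.mapPath γ = 0 ∨ Mono (𝔙.mapPath γ)

/-- Pure: each epimorphism among the associated maps is an isomorphism. -/
def IsPure (𝔙 : Q.Rep C) : Prop :=
  ∀ (u w : Q.V) (γ : Q.Path u w), Epi (𝔙.mapPath γ) → IsIso (𝔙.mapPath γ)

/-- Locally finite: compositions along long enough arriving paths vanish. -/
def LocallyFinite (𝔙 : Q.Rep C) : Prop :=
  ∀ v : Q.V, ∃ ℓ : ℕ, ∀ (u : Q.V) (γ : Q.Path u v), ℓ < γ.length → 𝔙.mapPath γ = 0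

/-- Faithfully generated by a vertex `w`: `φ^w_v` is an isomorphism for every `v`. -/
def FaithfullyGeneratedBy (𝔙 : Q.Rep C) (w : Q.V) : Prop :=
  ∀ (v : Q.V) (γ : Q.Path w v), γ.Admissible → IsIso (𝔙.mapPath γ)

/-- Generated by a set `H`: the images of compositions along paths from `H` to `v` sum
to the whole object at `v` (stated via upper bounds of subobjects). -/
def GeneratedBy (𝔙 : Q.Rep C) (H : Set Q.V) : Prop :=
  ∀ v : Q.V, ∀ W : Subobject (𝔙.obj v),
    (∀ z ∈ H, ∀ γ : Q.Path z v, imageSubobject (𝔙.mapPath γ) ≤ W) → W = ⊤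

/-- 1-generated by a set `H`. -/
def OneGeneratedBy (𝔙 : Q.Rep C) (H : Set Q.V) : Prop :=
  ∀ v : Q.V, ∃ w ∈ H, ∃ γ : Q.Path w v, γ.Admissible ∧ Epi (𝔙.mapPath γ)

/-- A subobject-valued sum being everything, stated via upper bounds. -/
def SumTop {X : C} (S : Set (Subobject X)) : Prop :=
  ∀ W : Subobject X, (∀ s ∈ S, s ≤ W) → W = ⊤

/-- A primitive vertex for a net: the images of the maps of arrows arriving at `w` do
not sum to the whole object. -/
def Primitive (𝔙 : Q.Rep C) (w : Q.V) : Prop :=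
  ¬ SumTop {s : Subobject (𝔙.obj w) | ∃ (e : Q.E) (h : Q.tgt e = w),
      s = imageSubobject (𝔙.map e ≫ eqToHom (congrArg 𝔙.obj h))}

/-- The intersection property at a vertex `v`, where `K v I` denotes `Ker φ^v_I`. -/
def IntersectionProp (𝔙 : Q.Rep C)
    (K : ∀ v : Q.V, Set (Fin (n + 1)) → Subobject (𝔙.obj v)) (v : Q.V) : Prop :=
  ∀ (m : ℕ) (I : Fin (m + 1) → Set (Fin (n + 1))),
    (Finset.univ.sup fun ℓ : Fin m => K v (I ℓ.succ)) ⊓ K v (I 0)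
      = Finset.univ.sup fun ℓ : Fin m => K v (I ℓ.succ ∩ I 0)

end Abelian

end TypedQuiver

namespace Stmt5Aux

open TypedQuiver

variable {n : ℕ} {Q : TypedQuiver n}

lemma count_comp {u w x : Q.V} (γ : Q.Path u w) (δ : Q.Path w x) (t : Fin (n + 1)) :
    (γ.comp δ).count t = γ.count t + δ.count t := by
  induction δ with
  | nil => simp [Path.comp, Path.count]
  | cons e δ ih => simp [Path.comp, Path.count, ih]; ring

def castSrc {u u' w : Q.V} (h : u = u') (γ : Q.Path u w) : Q.Path u' w := h ▸ γ

def castTgt {u w w' : Q.V} (h : w = w') (γ : Q.Path u w) : Q.Path u w' := h ▸ γ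

lemma count_castSrc {u u' w : Q.V} (h : u = u') (γ : Q.Path u w) (t : Fin (n + 1)) :
    (castSrc h γ).count t = γ.count t := by subst h; rfl

lemma count_castTgt {u w w' : Q.V} (h : w = w') (γ : Q.Path u w) (t : Fin (n + 1)) :
    (castTgt h γ).count t = γ.count t := by subst h; rfl

noncomputable def arrowOut (hQ : Q.IsZn) (x : Q.V) (t : Fin (n + 1)) : Q.E :=
  (hQ.unique_out x t).choose

lemma src_arrowOut (hQ : Q.IsZn) (x : Q.V) (t : Fin (n + 1)) :
    Q.src (arrowOut hQ x t) = x := (hQ.unique_out x t).choose_spec.1.1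

lemma typ_arrowOut (hQ : Q.IsZn) (x : Q.V) (t : Fin (n + 1)) :
    Q.typ (arrowOut hQ x t) = t := (hQ.unique_out x t).choose_spec.1.2

lemma arrowOut_unique (hQ : Q.IsZn) (e : Q.E) :
    e = arrowOut hQ (Q.src e) (Q.typ e) :=
  ((hQ.unique_out (Q.src e) (Q.typ e)).choose_spec.2 e ⟨rfl, rfl⟩)

/-- follow the unique out-arrow of type `t`. -/
noncomputable def step (hQ : Q.IsZn) (t : Fin (n + 1)) (x : Q.V) : Q.V :=
  Q.tgt (arrowOut hQ x t)

lemma tgt_eq_step (hQ : Q.IsZn) (e : Q.E) :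
    Q.tgt e = step hQ (Q.typ e) (Q.src e) := by
  rw [step]; exact congrArg Q.tgt (arrowOut_unique hQ e)

/-- the single-arrow path of type `t` out of `x`. -/
noncomputable def singlePath (hQ : Q.IsZn) (x : Q.V) (t : Fin (n + 1)) :
    Q.Path x (step hQ t x) :=
  castSrc (src_arrowOut hQ x t) (Path.cons (arrowOut hQ x t) (Path.nil _))

lemma count_singlePath (hQ : Q.IsZn) (x : Q.V) (t s : Fin (n + 1)) :
    (singlePath hQ x t).count s = if t = s then 1 else 0 := by
  refine (count_castSrc (w := Q.tgt (arrowOut hQ x t)) (src_arrowOut hQ x t)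
    (Path.cons (arrowOut hQ x t) (Path.nil _)) s).trans ?_
  simp [Path.count, typ_arrowOut]

/-- follow arrows with types given by a list. -/
noncomputable def follow (hQ : Q.IsZn) : List (Fin (n + 1)) → Q.V → Q.V
  | [], x => x
  | t :: L, x => follow hQ L (step hQ t x)

noncomputable def pathList (hQ : Q.IsZn) :
    (L : List (Fin (n + 1))) → (x : Q.V) → Q.Path x (follow hQ L x)
  | [], x => Path.nil x
  | t :: L, x => (singlePath hQ x t).comp (pathList hQ L (step hQ t x))

lemma count_pathList (hQ : Q.IsZn) (L : List (Fin (n + 1))) (x : Q.V) (t : Fin (n + 1)) :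
    (pathList hQ L x).count t = L.count t := by
  induction L generalizing x with
  | nil => show (Path.nil x : Q.Path x x).count t = List.count t []; simp [Path.count]
  | cons s L ih =>
    rw [show (pathList hQ (s :: L) x).count t = _ from
      count_comp (singlePath hQ x s) (pathList hQ L (step hQ s x)) t,
      count_singlePath, ih, List.count_cons]
    simp [Nat.add_comm]

lemma follow_append (hQ : Q.IsZn) (L₁ L₂ : List (Fin (n + 1))) (x : Q.V) :
    follow hQ (L₁ ++ L₂) x = follow hQ L₂ (follow hQ L₁ x) := by
  induction L₁ generalizing x with
  | nil => rfl
  | cons t L ih => simp [follow, ih]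

/-- any list containing each type exactly once gives a circuit. -/
lemma follow_eq_self (hQ : Q.IsZn) (L : List (Fin (n + 1)))
    (hL : ∀ t, L.count t = 1) (x : Q.V) : follow hQ L x = x :=
  (hQ.circuit x _ (pathList hQ L x) (fun t => by rw [count_pathList]; exact hL t)).symm

lemma count_of_perm_finRange (L : List (Fin (n + 1)))
    (hL : L.Perm (List.finRange (n + 1))) (t : Fin (n + 1)) : L.count t = 1 := by
  rw [hL.count_eq]
  exact List.count_eq_one_of_mem (List.nodup_finRange _) (List.mem_finRange t)

lemma cons_erase_perm (t : Fin (n + 1)) :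
    (t :: (List.finRange (n + 1)).erase t).Perm (List.finRange (n + 1)) :=
  (List.perm_cons_erase (List.mem_finRange t)).symm

lemma step_injective (hQ : Q.IsZn) (t : Fin (n + 1)) :
    Function.Injective (step hQ t) := by
  intro x y h
  have hx := follow_eq_self hQ (t :: (List.finRange (n + 1)).erase t)
      (count_of_perm_finRange _ (cons_erase_perm t)) x
  have hy := follow_eq_self hQ (t :: (List.finRange (n + 1)).erase t)
      (count_of_perm_finRange _ (cons_erase_perm t)) y
  rw [follow] at hx hy
  rw [← hx, ← hy, h]

lemma follow_injective (hQ : Q.IsZn) (L : List (Fin (n + 1))) :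
    Function.Injective (follow hQ L) := by
  induction L with
  | nil => exact fun x y h => h
  | cons t L ih => exact fun x y h => step_injective hQ t (ih h)

lemma step_comm (hQ : Q.IsZn) (a b : Fin (n + 1)) (x : Q.V) :
    step hQ a (step hQ b x) = step hQ b (step hQ a x) := by
  rcases eq_or_ne a b with rfl | hab
  · rfl
  · set R := ((List.finRange (n + 1)).erase a).erase b with hR
    have hmem : b ∈ (List.finRange (n + 1)).erase a :=
      (List.mem_erase_of_ne hab.symm).mpr (List.mem_finRange b)
    have hperm1 : (a :: b :: R).Perm (List.finRange (n + 1)) := by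
      refine List.Perm.trans ?_ (cons_erase_perm a)
      exact List.Perm.cons a (List.perm_cons_erase hmem).symm
    have hperm2 : (b :: a :: R).Perm (List.finRange (n + 1)) :=
      List.Perm.trans (List.Perm.swap a b R) hperm1
    have h1 := follow_eq_self hQ (a :: b :: R) (count_of_perm_finRange _ hperm1) x
    have h2 := follow_eq_self hQ (b :: a :: R) (count_of_perm_finRange _ hperm2) x
    rw [follow, follow] at h1 h2
    exact (follow_injective hQ R (h1.trans h2.symm)).symm

/-- the `t`-predecessor of `v`. -/
noncomputable def pred (hQ : Q.IsZn) (t : Fin (n + 1)) (v : Q.V) : Q.V :=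
  follow hQ ((List.finRange (n + 1)).erase t) v

lemma step_pred (hQ : Q.IsZn) (t : Fin (n + 1)) (v : Q.V) :
    step hQ t (pred hQ t v) = v := by
  have hperm : ((List.finRange (n + 1)).erase t ++ [t]).Perm (List.finRange (n + 1)) :=
    (List.perm_append_singleton t _).trans (cons_erase_perm t)
  have h := follow_eq_self hQ ((List.finRange (n + 1)).erase t ++ [t])
      (count_of_perm_finRange _ hperm) v
  rw [follow_append] at h
  exact h

lemma pred_unique (hQ : Q.IsZn) (e : Q.E) :
    Q.src e = pred hQ (Q.typ e) (Q.tgt e) := by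
  apply step_injective hQ (Q.typ e)
  rw [step_pred, ← tgt_eq_step]

/-- Key lemma: if a path from `z` to `v` uses type `t` but not type `r`, there is a
path from `z` to the `t`-predecessor of `v` avoiding type `r`. -/
lemma exists_path_to_pred (hQ : Q.IsZn) {z v : Q.V} (t r : Fin (n + 1)) (_hrt : r ≠ t)
    (δ : Q.Path z v) (ht : δ.count t ≠ 0) (hr : δ.count r = 0) :
    ∃ γ : Q.Path z (pred hQ t v), γ.count r = 0 := by
  induction δ with
  | nil => simp [Path.count] at ht
  | cons f δ' ih =>
    rw [Path.count] at ht hr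
    have hr' : δ'.count r = 0 := by omega
    have hfr : Q.typ f ≠ r := by
      intro h
      rw [if_pos h] at hr
      omega
    by_cases hft : Q.typ f = t
    · have hsrc : Q.src f = pred hQ t (Q.tgt f) := hft ▸ pred_unique hQ f
      exact ⟨castTgt hsrc δ', by rw [count_castTgt]; exact hr'⟩
    · have ht' : δ'.count t ≠ 0 := by
        rw [if_neg hft] at ht
        omega
      obtain ⟨γ', hγ'⟩ := ih ht' hr'
      have key : step hQ (Q.typ f) (pred hQ t (Q.src f)) = pred hQ t (Q.tgt f) := by
        apply step_injective hQ t
        rw [step_comm, step_pred, ← tgt_eq_step, step_pred]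
      refine ⟨γ'.comp (castTgt key (singlePath hQ (pred hQ t (Q.src f)) (Q.typ f))), ?_⟩
      rw [count_comp, hγ', count_castTgt, count_singlePath, if_neg hfr]

end Stmt5Aux

open TypedQuiver in
/-- `v ∉ P(H)` iff there is a vertex `w ≠ v` such that for each `z ∈ H`
there is an admissible path from `z` to `v` passing through `w`. -/
theorem stmt5 {n : ℕ} (Q : TypedQuiver n) (hQ : Q.IsZn) (H : Set Q.V)
    (hne : H.Nonempty) (v : Q.V) :
    v ∉ hull Q H ↔ ∃ w : Q.V, w ≠ v ∧ ∀ z ∈ H,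
      ∃ (γ₁ : Q.Path z w) (γ₂ : Q.Path w v), (γ₁.comp γ₂).Admissible := by
  open Stmt5Aux in
  constructor
  · -- forward direction
    intro hv
    rw [hull, Set.mem_setOf_eq] at hv
    push_neg at hv
    obtain ⟨t, hT⟩ := hv
    -- a second type `s ≠ t`
    have hnt : Nontrivial (Fin (n + 1)) := by
      have := hQ.npos
      refine Fin.nontrivial_iff_two_le.mpr (by omega)
    obtain ⟨s, hst⟩ := exists_ne t
    set w := pred hQ t v with hw
    -- the single arrow path from w to v
    let γ₂ : Q.Path w v := castTgt (step_pred hQ t v) (singlePath hQ w t)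
    have hγ₂ : ∀ s', γ₂.count s' = if t = s' then 1 else 0 := fun s' => by
      rw [show γ₂ = castTgt (step_pred hQ t v) (singlePath hQ w t) from rfl,
        count_castTgt, count_singlePath]
    have hwv : w ≠ v := by
      intro h
      have hadm : (castSrc h γ₂).Admissible :=
        ⟨s, by rw [count_castSrc, hγ₂, if_neg (Ne.symm hst)]⟩
      have := (hQ.same_type v v v (castSrc h γ₂) (Path.nil v) hadm ⟨t, by simp [Path.count]⟩).mp rfl
      have h1 := congrFun this t
      rw [count_castSrc, hγ₂, if_pos rfl] at h1
      simp [Path.count] at h1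
    refine ⟨w, hwv, fun z hz => ?_⟩
    obtain ⟨δ, r, hδr⟩ := hQ.connected z v
    have hδt : δ.count t ≠ 0 := fun h => hT z hz δ h
    have hrt : r ≠ t := fun h => hδt (h ▸ hδr)
    obtain ⟨γ₁, hγ₁⟩ := exists_path_to_pred hQ t r hrt δ hδt hδr
    refine ⟨γ₁, γ₂, r, ?_⟩
    rw [count_comp, hγ₁, hγ₂, if_neg (Ne.symm hrt)]
  · -- backward direction
    rintro ⟨w, hwv, hz⟩ hv
    rw [hull, Set.mem_setOf_eq] at hv
    obtain ⟨z₀, hz₀⟩ := hne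
    obtain ⟨γ₁z, γ₂z, hadmz⟩ := hz z₀ hz₀
    have hγ₂zadm : γ₂z.Admissible := by
      obtain ⟨t', ht'⟩ := hadmz
      rw [count_comp] at ht'
      exact ⟨t', by omega⟩
    have key : ∀ t, γ₂z.count t = 0 := by
      intro t
      obtain ⟨z, hzH, δ, hδ⟩ := hv t
      obtain ⟨γ₁, γ₂, hadm'⟩ := hz z hzH
      have hcnt := (hQ.same_type z v v (γ₁.comp γ₂) δ hadm' ⟨t, hδ⟩).mp rfl
      have h1 := congrFun hcnt t
      rw [count_comp, hδ] at h1
      have hγ₂t : γ₂.count t = 0 := by omega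
      have hcnt2 := (hQ.same_type w v v γ₂z γ₂ hγ₂zadm ⟨t, hγ₂t⟩).mp rfl
      have h2 := congrFun hcnt2 t
      omega
    have : v = w := by
      refine (hQ.same_type w v w γ₂z (Path.nil w) hγ₂zadm ⟨0, by simp [Path.count]⟩).mpr ?_
      funext t
      simpa [Path.count] using key t
    exact hwv this.symm
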